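/- The acyclic path probability c(j → A) is submodular in the target set: for all sets A ⊆ B ⊆ V, every node v ∈ V \ B and every node j ∈ V, c(j → A ∪ {v}) − c(j → A) ≥ c(j → B ∪ {v}) − c(j → B). -/

import Mathlib

open Finset

noncomputable def cPath {V : Type*} [Fintype V] [DecidableEq V]
    (w : V → V → ℝ) (W D : Finset V) (j : V) : ℝ := by
  classical
  exact ∑' k : ℕ, ∑ x : Fin (k + 1) → V,
    if x 0 = j ∧ Function.Injective x ∧
        (∀ m : Fin (k + 1), (m : ℕ) < k → x m ∈ W \ D) ∧ x (Fin.last k) ∈ D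
    then ∏ i : Fin k, w (x i.succ) (x i.castSucc) else 0

noncomputable def cPathVia {V : Type*} [Fintype V] [DecidableEq V]
    (w : V → V → ℝ) (W D : Finset V) (j v : V) : ℝ := by
  classical
  exact ∑' k : ℕ, ∑ x : Fin (k + 1) → V,
    if x 0 = j ∧ Function.Injective x ∧
        (∀ m : Fin (k + 1), (m : ℕ) < k → x m ∈ W \ D) ∧ x (Fin.last k) ∈ D ∧
        (∃ u : Fin (k + 1), (u : ℕ) < k ∧ x u = v)
    then ∏ i : Fin k, w (x i.succ) (x i.castSucc) else 0

noncomputable def sigmaInfl {V : Type*} [Fintype V] [DecidableEq V]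
    (w : V → V → ℝ) (W A : Finset V) : ℝ :=
  ∑ j ∈ W, cPath w W A j

def pjv {V : Type*} (w : V → V → ℝ) (j v : V) : List V → ℝ
  | [] => w v j
  | l :: ls => w l j * pjv w l v ls

noncomputable def fPoly {ι : Type*} [DecidableEq ι] (m : ℕ) (T : Finset ι) (x : ι → ℝ) : ℝ :=
  (Nat.factorial m : ℝ) * ∑ S ∈ T.powersetCard m, ∏ s ∈ S, x s

/-!
Deleting the first node of an acyclic path gives the recursion
`c^W(j → D) = ∑ᵢ w(i,j) · c^{W∖{j}}(i → D)` for `j ∈ W ∖ D`, while `c^W(j → D)` is `1` on `D` and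
`0` outside `W ∪ D`. Since `W` shrinks, strong induction on `W` gives `0 ≤ c ≤ 1` (the column sums
of `w` are at most `1`), monotonicity in `D`, and the diminishing gain of adding `v` to `D`: the
recursion is linear with nonnegative weights, so the inequality propagates from the successors,
and in the base cases `j = v` and `j ∈ B` it reduces to monotonicity.
-/

section

variable {V : Type*}

def pathWeight (w : V → V → ℝ) {k : ℕ} (x : Fin (k + 1) → V) : ℝ :=
  ∏ i : Fin k, w (x i.succ) (x i.castSucc)

theorem pathWeight_cons (w : V → V → ℝ) {k : ℕ} (a : V) (y : Fin (k + 1) → V) :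
    pathWeight w (Fin.cons a y : Fin (k + 1 + 1) → V) = w (y 0) a * pathWeight w y := by
  simp [pathWeight, Fin.prod_univ_succ]

theorem sum_fun_fin_succ [Fintype V] {M : Type*} [AddCommMonoid M] {n : ℕ}
    (f : (Fin (n + 1) → V) → M) :
    ∑ x, f x = ∑ a, ∑ y : Fin n → V, f (Fin.cons a y) := by
  rw [← (Fin.consEquiv fun _ => V).sum_comp, Fintype.sum_prod_type]
  rfl

variable [DecidableEq V]

def IsPathInto (W D : Finset V) {k : ℕ} (x : Fin (k + 1) → V) : Prop :=
  Function.Injective x ∧ (∀ m : Fin (k + 1), (m : ℕ) < k → x m ∈ W \ D) ∧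
    x (Fin.last k) ∈ D

instance (W D : Finset V) {k : ℕ} (x : Fin (k + 1) → V) :
    Decidable (IsPathInto W D x) := by
  unfold IsPathInto; infer_instance

theorem IsPathInto.mem_sdiff_or_mem {W D : Finset V} {k : ℕ} {x : Fin (k + 1) → V}
    (hx : IsPathInto W D x) (m : Fin (k + 1)) : x m ∈ W \ D ∨ x m ∈ D := by
  by_cases hm : (m : ℕ) < k
  · exact Or.inl (hx.2.1 m hm)
  · obtain rfl : m = Fin.last k := Fin.ext (by simp; omega)
    exact Or.inr hx.2.2

theorem isPathInto_cons_iff {W D : Finset V} {k : ℕ} {a : V} {y : Fin (k + 1) → V} :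
    IsPathInto W D (Fin.cons a y : Fin (k + 1 + 1) → V) ↔
      a ∈ W \ D ∧ IsPathInto (W.erase a) D y := by
  have hlast : (Fin.cons a y : Fin (k + 1 + 1) → V) (Fin.last (k + 1)) = y (Fin.last k) := by
    rw [← Fin.succ_last, Fin.cons_succ]
  unfold IsPathInto
  rw [Fin.cons_injective_iff, Fin.forall_fin_succ, hlast]
  simp only [Fin.cons_zero, Fin.cons_succ, Fin.val_zero, Fin.val_succ, Nat.zero_lt_succ,
    true_imp_iff, Nat.add_lt_add_iff_right]
  constructor
  · rintro ⟨⟨ha, hinj⟩, ⟨haW, hy⟩, hD⟩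
    refine ⟨haW, hinj, fun m hm => ?_, hD⟩
    have := hy m hm
    simp only [mem_sdiff, mem_erase] at this ⊢
    exact ⟨⟨fun h => ha ⟨m, h⟩, this.1⟩, this.2⟩
  · rintro ⟨haW, hinj, hy, hD⟩
    have hpath : IsPathInto (W.erase a) D y := ⟨hinj, hy, hD⟩
    refine ⟨⟨?_, hinj⟩, ⟨haW, fun m hm => ?_⟩, hD⟩
    · rintro ⟨m, rfl⟩
      rcases hpath.mem_sdiff_or_mem m with h | h
      · simp at h
      · exact (mem_sdiff.mp haW).2 h
    · exact sdiff_subset_sdiff (erase_subset a W) le_rfl (hy m hm)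

variable [Fintype V] (w : V → V → ℝ)

noncomputable def pathSum (W D : Finset V) (j : V) (k : ℕ) : ℝ :=
  ∑ x : Fin (k + 1) → V, if x 0 = j ∧ IsPathInto W D x then pathWeight w x else 0

theorem cPath_eq_tsum (W D : Finset V) (j : V) :
    cPath w W D j = ∑' k, pathSum w W D j k := by
  unfold cPath pathSum IsPathInto pathWeight
  congr!

theorem pathSum_zero (W D : Finset V) (j : V) : pathSum w W D j 0 = if j ∈ D then 1 else 0 := by
  have hpath (x : Fin 1 → V) : IsPathInto W D x ↔ x 0 ∈ D :=
    ⟨fun h => h.2.2, fun h => ⟨Function.injective_of_subsingleton x, by simp, h⟩⟩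
  rw [pathSum, ← (Equiv.funUnique (Fin 1) V).symm.sum_comp]
  simp [hpath, pathWeight, ite_and]

theorem pathSum_succ (W D : Finset V) (j : V) (k : ℕ) :
    pathSum w W D j (k + 1) =
      if j ∈ W \ D then ∑ i, w i j * pathSum w (W.erase j) D i k else 0 := by
  rw [pathSum, sum_fun_fin_succ]
  simp only [Fin.cons_zero, isPathInto_cons_iff, pathWeight_cons]
  rw [Fintype.sum_eq_single j fun a ha => sum_eq_zero fun y _ => if_neg fun h => ha h.1]
  split_ifs with hj
  · simp only [pathSum, mul_sum]
    rw [sum_comm]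
    refine sum_congr rfl fun y _ => ?_
    simp only [hj, true_and, mul_ite, mul_zero, ite_and, sum_ite_eq, mem_univ, if_true]
  · exact sum_eq_zero fun y _ => if_neg fun h => hj h.2.1

theorem pathSum_eq_zero_of_card_le (W D : Finset V) (j : V) {k : ℕ} (hk : Fintype.card V ≤ k) :
    pathSum w W D j k = 0 := by
  refine sum_eq_zero fun x _ => if_neg fun hx => ?_
  have := Fintype.card_le_of_injective x hx.2.1
  simp only [Fintype.card_fin] at this
  omega

theorem cPath_eq_sum_range (W D : Finset V) (j : V) {N : ℕ} (hN : Fintype.card V ≤ N) :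
    cPath w W D j = ∑ k ∈ range N, pathSum w W D j k := by
  rw [cPath_eq_tsum]
  exact tsum_eq_sum fun k hk =>
    pathSum_eq_zero_of_card_le w W D j (hN.trans (not_lt.mp (mt mem_range.mpr hk)))

theorem cPath_eq (W D : Finset V) (j : V) :
    cPath w W D j = (if j ∈ D then 1 else 0) +
      if j ∈ W \ D then ∑ i, w i j * cPath w (W.erase j) D i else 0 := by
  rw [cPath_eq_sum_range w W D j (Nat.le_succ _), sum_range_succ', pathSum_zero, add_comm]
  congr 1
  split_ifs with hj
  · simp only [pathSum_succ, hj, if_true]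
    rw [sum_comm]
    simp only [← mul_sum, cPath_eq_sum_range w (W.erase j) D _ le_rfl]
  · simp [pathSum_succ, hj]

theorem cPath_of_mem {W D : Finset V} {j : V} (hj : j ∈ D) : cPath w W D j = 1 := by
  rw [cPath_eq]
  simp [hj]

theorem cPath_of_notMem_of_notMem {W D : Finset V} {j : V} (hW : j ∉ W) (hD : j ∉ D) :
    cPath w W D j = 0 := by
  rw [cPath_eq]
  simp [hW, hD]

theorem cPath_of_mem_of_notMem {W D : Finset V} {j : V} (hW : j ∈ W) (hD : j ∉ D) :
    cPath w W D j = ∑ i, w i j * cPath w (W.erase j) D i := by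
  rw [cPath_eq]
  simp [hW, hD]

theorem cPath_nonneg (hw0 : ∀ i j, 0 ≤ w i j) (W D : Finset V) (j : V) :
    0 ≤ cPath w W D j := by
  induction W using Finset.strongInduction generalizing j with
  | H W ih =>
    by_cases hD : j ∈ D
    · simp [cPath_of_mem w hD]
    by_cases hW : j ∈ W
    · rw [cPath_of_mem_of_notMem w hW hD]
      exact sum_nonneg fun i _ => mul_nonneg (hw0 i j) (ih _ (erase_ssubset hW) i)
    · rw [cPath_of_notMem_of_notMem w hW hD]

theorem cPath_le_one (hw0 : ∀ i j, 0 ≤ w i j) (hw1 : ∀ j, ∑ i ∈ univ.erase j, w i j ≤ 1)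
    (W D : Finset V) (j : V) : cPath w W D j ≤ 1 := by
  induction W using Finset.strongInduction generalizing j with
  | H W ih =>
    by_cases hD : j ∈ D
    · rw [cPath_of_mem w hD]
    by_cases hW : j ∈ W
    · have hjj : w j j * cPath w (W.erase j) D j = 0 := by
        rw [cPath_of_notMem_of_notMem w (notMem_erase j W) hD, mul_zero]
      rw [cPath_of_mem_of_notMem w hW hD,
        ← sum_erase (f := fun i => w i j * cPath w (W.erase j) D i) univ hjj]
      calc ∑ i ∈ univ.erase j, w i j * cPath w (W.erase j) D i
          ≤ ∑ i ∈ univ.erase j, w i j :=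
            sum_le_sum fun i _ => mul_le_of_le_one_right (hw0 i j) (ih _ (erase_ssubset hW) i)
        _ ≤ 1 := hw1 j
    · rw [cPath_of_notMem_of_notMem w hW hD]
      exact zero_le_one

theorem cPath_mono (hw0 : ∀ i j, 0 ≤ w i j) (hw1 : ∀ j, ∑ i ∈ univ.erase j, w i j ≤ 1)
    (W : Finset V) {D D' : Finset V} (hDD' : D ⊆ D') (j : V) :
    cPath w W D j ≤ cPath w W D' j := by
  induction W using Finset.strongInduction generalizing j with
  | H W ih =>
    by_cases hD : j ∈ D
    · rw [cPath_of_mem w hD, cPath_of_mem w (hDD' hD)]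
    by_cases hD' : j ∈ D'
    · rw [cPath_of_mem w hD']
      exact cPath_le_one w hw0 hw1 W D j
    by_cases hW : j ∈ W
    · rw [cPath_of_mem_of_notMem w hW hD, cPath_of_mem_of_notMem w hW hD']
      exact sum_le_sum fun i _ =>
        mul_le_mul_of_nonneg_left (ih _ (erase_ssubset hW) i) (hw0 i j)
    · rw [cPath_of_notMem_of_notMem w hW hD]
      exact cPath_nonneg w hw0 W D' j

theorem cPath_insert_sub_le_of_subset (hw0 : ∀ i j, 0 ≤ w i j)
    (hw1 : ∀ j, ∑ i ∈ univ.erase j, w i j ≤ 1) (W : Finset V) {A B : Finset V}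
    (hAB : A ⊆ B) (v j : V) :
    cPath w W (insert v B) j - cPath w W B j ≤ cPath w W (insert v A) j - cPath w W A j := by
  induction W using Finset.strongInduction generalizing j with
  | H W ih =>
    by_cases hjv : j = v
    · subst hjv
      rw [cPath_of_mem w (mem_insert_self j B), cPath_of_mem w (mem_insert_self j A)]
      linarith [cPath_mono w hw0 hw1 W hAB j]
    by_cases hB : j ∈ B
    · rw [cPath_of_mem w hB, cPath_of_mem w (mem_insert_of_mem hB)]
      linarith [cPath_mono w hw0 hw1 W (subset_insert v A) j]
    have hA : j ∉ A := fun h => hB (hAB h)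
    have hvB : j ∉ insert v B := by simp [hjv, hB]
    have hvA : j ∉ insert v A := by simp [hjv, hA]
    by_cases hW : j ∈ W
    · rw [cPath_of_mem_of_notMem w hW hvB, cPath_of_mem_of_notMem w hW hB,
        cPath_of_mem_of_notMem w hW hvA, cPath_of_mem_of_notMem w hW hA,
        ← sum_sub_distrib, ← sum_sub_distrib]
      exact sum_le_sum fun i _ => by
        simpa only [← mul_sub] using
          mul_le_mul_of_nonneg_left (ih _ (erase_ssubset hW) i) (hw0 i j)
    · rw [cPath_of_notMem_of_notMem w hW hvB, cPath_of_notMem_of_notMem w hW hB,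
        cPath_of_notMem_of_notMem w hW hvA, cPath_of_notMem_of_notMem w hW hA]

end

theorem stmt10_general {V : Type*} [Fintype V] [DecidableEq V] (w : V → V → ℝ)
    (hw0 : ∀ i j : V, 0 ≤ w i j)
    (hw1 : ∀ j : V, ∑ i ∈ Finset.univ.erase j, w i j ≤ 1)
    (A B : Finset V) (hAB : A ⊆ B) (v : V) (j : V) :
    cPath w Finset.univ (insert v B) j - cPath w Finset.univ B j
      ≤ cPath w Finset.univ (insert v A) j - cPath w Finset.univ A j :=
  cPath_insert_sub_le_of_subset w hw0 hw1 univ hAB v j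

theorem stmt10 {V : Type*} [Fintype V] [DecidableEq V] (w : V → V → ℝ)
    (hw0 : ∀ i j : V, 0 ≤ w i j)
    (hw1 : ∀ j : V, ∑ i ∈ Finset.univ.erase j, w i j ≤ 1)
    (A B : Finset V) (hAB : A ⊆ B) (v : V) (hv : v ∉ B) (j : V) :
    cPath w Finset.univ (insert v B) j - cPath w Finset.univ B j
      ≤ cPath w Finset.univ (insert v A) j - cPath w Finset.univ A j :=
  stmt10_general w hw0 hw1 A B hAB v j
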